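/- Let X_1,...,X_n be independent nonnegative logconcave random variables each with mean μ. Then for ε ∈ [0,1], Pr[∑ X_i ≤ (1−ε)μn] ≤ exp(−n(−ln(1−ε) − ε)). -/

import Mathlib

/-!
By the Chernoff bound and independence, `P[∑ Xᵢ ≤ (1-ε)μn] ≤ e^{λ(1-ε)μn} ∏ E[e^{-λXᵢ}]`, so it
suffices that every nonnegative logconcave `X` with mean `μ` has `E[e^{-λX}] ≤ 1/(1+λμ)`, the
Laplace transform of the exponential law with the same mean; `λ = ε/((1-ε)μ)` then gives the bound.

For the comparison, let `g` be the exponential density with mean `μ`. As `f(x)·e^{x/μ}` is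
logconcave, the set `J` where `f > g` is an interval in `[0, ∞)`, so `f - g` is `≤ 0`, `≥ 0`, `≤ 0`
on three consecutive intervals. The convex decreasing `φ(x) = e^{-λx}` lies below its chord `ℓ`
over `J` on `J` and above it off `J`, hence `(φ - ℓ)(f - g) ≤ 0`. Integrating, and using that `f`
and `g` have the same mass and mean, gives `∫ φ f ≤ ∫ φ g`.
-/

open MeasureTheory ProbabilityTheory

/-- A function `f : ℝ → ℝ` (a density) is logconcave. -/
def LogConcaveFn (f : ℝ → ℝ) : Prop :=
  ∀ x y t : ℝ, 0 ≤ t → t ≤ 1 → (f x) ^ t * (f y) ^ (1 - t) ≤ f (t * x + (1 - t) * y)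

open Real Set

namespace LogConcaveFn

variable {f : ℝ → ℝ}

theorem mul_exp_mul (hf0 : ∀ x, 0 ≤ f x) (hlc : LogConcaveFn f) (k : ℝ) :
    LogConcaveFn fun x => f x * exp (k * x) := by
  intro x y t ht0 ht1
  rw [mul_rpow (hf0 x) (exp_pos _).le, mul_rpow (hf0 y) (exp_pos _).le, ← exp_mul, ← exp_mul]
  calc f x ^ t * exp (k * x * t) * (f y ^ (1 - t) * exp (k * y * (1 - t)))
      = f x ^ t * f y ^ (1 - t) * exp (k * (t * x + (1 - t) * y)) := by
        rw [mul_mul_mul_comm, ← exp_add]; ring_nf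
    _ ≤ f (t * x + (1 - t) * y) * exp (k * (t * x + (1 - t) * y)) :=
        mul_le_mul_of_nonneg_right (hlc x y t ht0 ht1) (exp_pos _).le

theorem ordConnected_setOf_lt (hf0 : ∀ x, 0 ≤ f x) (hlc : LogConcaveFn f) {c : ℝ} (hc : 0 ≤ c) :
    {x | c < f x}.OrdConnected := by
  refine (convex_iff_ordConnected (𝕜 := ℝ)).1 fun p hp q hq s t hs ht hst => ?_
  obtain rfl : t = 1 - s := by linarith
  set m := min (f p) (f q)
  have hm : c < m := lt_min hp hq
  have hm0 : 0 < m := hc.trans_lt hm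
  calc c < m ^ s * m ^ (1 - s) := by rwa [← rpow_add hm0, add_sub_cancel, rpow_one]
    _ ≤ f p ^ s * f q ^ (1 - s) :=
        mul_le_mul (rpow_le_rpow hm0.le (min_le_left _ _) hs)
          (rpow_le_rpow hm0.le (min_le_right _ _) ht) (by positivity) (rpow_nonneg (hf0 p) _)
    _ ≤ f (s • p + (1 - s) • q) := hlc p q s hs (by linarith)

theorem measurable (hf0 : ∀ x, 0 ≤ f x) (hlc : LogConcaveFn f) : Measurable f := by
  refine measurable_of_Ioi fun c => ?_
  rcases lt_or_ge c 0 with hc | hc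
  · convert MeasurableSet.univ
    exact eq_univ_of_forall fun x => hc.trans_le (hf0 x)
  · exact (hlc.ordConnected_setOf_lt hf0 hc).measurableSet

end LogConcaveFn

section Chord

variable {s : Set ℝ} {φ : ℝ → ℝ} {a b x : ℝ}

theorem ConvexOn.mul_le_chord (hφ : ConvexOn ℝ s φ) (ha : a ∈ s) (hb : b ∈ s) (hx : x ∈ Icc a b) :
    (b - a) * φ x ≤ (b - x) * φ a + (x - a) * φ b := by
  rcases hx.1.eq_or_lt with rfl | hax
  · linarith
  rcases hx.2.eq_or_lt with rfl | hxb
  · linarith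
  linarith [hφ.secant_mono_aux1 ha hb hax hxb]

theorem ConvexOn.chord_le_mul (hφ : ConvexOn ℝ s φ) (ha : a ∈ s) (hb : b ∈ s) (hxs : x ∈ s)
    (hab : a < b) (hx : x ∉ Ioo a b) :
    (b - x) * φ a + (x - a) * φ b ≤ (b - a) * φ x := by
  rcases le_or_gt x a with hxa | hax
  · rcases hxa.eq_or_lt with rfl | hxa
    · linarith
    linarith [hφ.secant_mono_aux1 hxs hb hxa hab]
  · have hbx : b ≤ x := not_lt.1 fun hxb => hx ⟨hax, hxb⟩
    rcases hbx.eq_or_lt with rfl | hbx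
    · linarith
    linarith [hφ.secant_mono_aux1 ha hxs hab hbx]

end Chord

section Crossing

variable {φ f g : ℝ → ℝ} {J : Set ℝ}

theorem ConvexOn.exists_affine_ge_on_le_off (hφ : ConvexOn ℝ univ φ) (hanti : Antitone φ)
    (hJ : J.OrdConnected) (hbdd : BddBelow J) (hJn : J.Nontrivial) :
    ∃ α β : ℝ, ∀ x, (x ∈ J → φ x ≤ α + β * x) ∧ (x ∉ J → α + β * x ≤ φ x) := by
  obtain ⟨p, hp, q, hq, hpq⟩ := hJn.exists_lt
  set a := sInf J
  by_cases hbA : BddAbove J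
  · set b := sSup J
    have hab : a < b := (csInf_le hbdd hp).trans_lt (hpq.trans_le (le_csSup hbA hq))
    have hba : 0 < b - a := sub_pos.2 hab
    have hIoo : Ioo a b ⊆ J :=
      IsConnected.Ioo_csInf_csSup_subset ⟨⟨p, hp⟩, hJ.isPreconnected⟩ hbdd hbA
    refine ⟨(b * φ a - a * φ b) / (b - a), (φ b - φ a) / (b - a), fun x => ?_⟩
    have hchord : (b * φ a - a * φ b) / (b - a) + (φ b - φ a) / (b - a) * x
        = ((b - x) * φ a + (x - a) * φ b) / (b - a) := by
      field_simp
      ring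
    rw [hchord, le_div_iff₀ hba, div_le_iff₀ hba, mul_comm _ (b - a)]
    exact ⟨fun hx => hφ.mul_le_chord trivial trivial (subset_Icc_csInf_csSup hbdd hbA hx),
      fun hx => hφ.chord_le_mul trivial trivial trivial hab fun hx' => hx (hIoo hx')⟩
  · have hIoi : Ioi a ⊆ J := hJ.isPreconnected.Ioi_csInf_subset hbdd hbA
    refine ⟨φ a, 0, fun x => ?_⟩
    rw [zero_mul, add_zero]
    exact ⟨fun hx => hanti (csInf_le hbdd hx),
      fun hx => hanti (not_lt.1 fun hax => hx (hIoi hax))⟩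

theorem ConvexOn.exists_affine_ae_mul_sub_nonpos {ν : Measure ℝ} [NullSingletonClass ν]
    (hφ : ConvexOn ℝ univ φ) (hanti : Antitone φ) (hφ0 : ∀ x, 0 ≤ φ x) (hJ : J.OrdConnected)
    (hbdd : BddBelow J)
    (hin : ∀ᵐ x ∂ν, x ∈ J → g x ≤ f x) (hout : ∀ᵐ x ∂ν, x ∉ J → f x ≤ g x) :
    ∃ α β : ℝ, ∀ᵐ x ∂ν, (φ x - (α + β * x)) * (f x - g x) ≤ 0 := by
  rcases J.subsingleton_or_nontrivial with hJs | hJn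
  · refine ⟨0, 0, ?_⟩
    filter_upwards [hout, measure_eq_zero_iff_ae_notMem.1 (hJs.measure_zero ν)] with x hx hxJ
    rw [zero_mul, add_zero, sub_zero]
    exact mul_nonpos_of_nonneg_of_nonpos (hφ0 x) (sub_nonpos.2 (hx hxJ))
  · obtain ⟨α, β, hαβ⟩ := hφ.exists_affine_ge_on_le_off hanti hJ hbdd hJn
    refine ⟨α, β, ?_⟩
    filter_upwards [hin, hout] with x hxin hxout
    by_cases hx : x ∈ J
    · exact mul_nonpos_of_nonpos_of_nonneg (sub_nonpos.2 ((hαβ x).1 hx)) (sub_nonneg.2 (hxin hx))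
    · exact mul_nonpos_of_nonneg_of_nonpos (sub_nonneg.2 ((hαβ x).2 hx)) (sub_nonpos.2 (hxout hx))

theorem integral_mul_le_of_affine_crossing {ν : Measure ℝ} {α β : ℝ}
    (hcross : ∀ᵐ x ∂ν, (φ x - (α + β * x)) * (f x - g x) ≤ 0)
    (hf : Integrable f ν) (hg : Integrable g ν)
    (hxf : Integrable (fun x => x * f x) ν) (hxg : Integrable (fun x => x * g x) ν)
    (hφf : Integrable (fun x => φ x * f x) ν) (hφg : Integrable (fun x => φ x * g x) ν)
    (hmass : ∫ x, f x ∂ν = ∫ x, g x ∂ν) (hmean : ∫ x, x * f x ∂ν = ∫ x, x * g x ∂ν) :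
    ∫ x, φ x * f x ∂ν ≤ ∫ x, φ x * g x ∂ν := by
  have hsplit : (fun x => (φ x - (α + β * x)) * (f x - g x)) = fun x =>
      (φ x * f x - φ x * g x) - (α * (f x - g x) + β * (x * f x - x * g x)) := by
    funext x; ring
  have h := integral_nonpos_of_ae hcross
  rw [hsplit, integral_sub (by exact hφf.sub hφg)
      (by exact ((hf.sub hg).const_mul α).add ((hxf.sub hxg).const_mul β)),
    integral_sub hφf hφg, integral_add (by exact (hf.sub hg).const_mul α)
      (by exact (hxf.sub hxg).const_mul β),
    integral_const_mul, integral_const_mul, integral_sub hf hg, integral_sub hxf hxg, hmass,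
    hmean] at h
  linarith

end Crossing

section ExponentialDensity

variable {r l x : ℝ}

theorem integral_Ioi_exp_neg_mul (hr : 0 < r) : ∫ x in Ioi 0, exp (-(r * x)) = r⁻¹ := by
  simpa using integral_rpow_mul_exp_neg_mul_Ioi one_pos hr

theorem integral_Ioi_mul_exp_neg_mul (hr : 0 < r) :
    ∫ x in Ioi 0, x * exp (-(r * x)) = (r ^ 2)⁻¹ := by
  simpa [show (2 : ℝ) - 1 = 1 by norm_num] using integral_rpow_mul_exp_neg_mul_Ioi two_pos hr

theorem exponentialPDFReal_eq_indicator (r : ℝ) :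
    exponentialPDFReal r = (Ici 0).indicator fun x => r * exp (-(r * x)) := by
  ext x
  simp [exponentialPDFReal, gammaPDFReal, indicator_apply]

theorem exponentialPDFReal_of_nonneg (hx : 0 ≤ x) :
    exponentialPDFReal r x = r * exp (-(r * x)) := by
  rw [exponentialPDFReal_eq_indicator, indicator_of_mem (mem_Ici.2 hx)]

theorem exponentialPDFReal_of_neg (hx : x < 0) : exponentialPDFReal r x = 0 := by
  rw [exponentialPDFReal_eq_indicator, indicator_of_notMem (show x ∉ Ici 0 from not_le.2 hx)]

theorem integral_mul_exponentialPDFReal (r : ℝ) (w : ℝ → ℝ) :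
    ∫ x, w x * exponentialPDFReal r x = ∫ x in Ioi 0, w x * (r * exp (-(r * x))) := by
  simp_rw [exponentialPDFReal_eq_indicator, ← indicator_mul_right]
  rw [integral_indicator measurableSet_Ici, integral_Ici_eq_integral_Ioi]

theorem integral_exponentialPDFReal (hr : 0 < r) : ∫ x, exponentialPDFReal r x = 1 := by
  have h := integral_mul_exponentialPDFReal r fun _ => 1
  simp_rw [one_mul] at h
  rw [h, integral_const_mul, integral_Ioi_exp_neg_mul hr, mul_inv_cancel₀ hr.ne']

theorem integral_id_mul_exponentialPDFReal (hr : 0 < r) :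
    ∫ x, x * exponentialPDFReal r x = r⁻¹ := by
  simp_rw [integral_mul_exponentialPDFReal, mul_left_comm _ r]
  rw [integral_const_mul, integral_Ioi_mul_exp_neg_mul hr]
  field_simp

theorem integral_exp_neg_mul_mul_exponentialPDFReal (hlr : 0 < l + r) :
    ∫ x, exp (-(l * x)) * exponentialPDFReal r x = r / (l + r) := by
  have hexp (x : ℝ) : exp (-(l * x)) * (r * exp (-(r * x))) = r * exp (-((l + r) * x)) := by
    rw [mul_left_comm, ← exp_add]; ring_nf
  simp_rw [integral_mul_exponentialPDFReal, hexp]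
  rw [integral_const_mul, integral_Ioi_exp_neg_mul hlr, div_eq_mul_inv]

end ExponentialDensity

theorem LogConcaveFn.ordConnected_setOf_exponentialPDFReal_lt {f : ℝ → ℝ} (hf0 : ∀ x, 0 ≤ f x)
    (hlc : LogConcaveFn f) {r : ℝ} (hr : 0 ≤ r) :
    {x | 0 ≤ x ∧ exponentialPDFReal r x < f x}.OrdConnected := by
  have hJ : {x | 0 ≤ x ∧ exponentialPDFReal r x < f x} = Ici 0 ∩ {x | r < f x * exp (r * x)} := by
    ext x
    refine and_congr_right fun hx => ?_
    rw [exponentialPDFReal_of_nonneg hx, mem_ofPred_eq, exp_neg, ← div_eq_mul_inv,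
      div_lt_iff₀ (exp_pos _)]
  rw [hJ]
  exact ordConnected_Ici.inter <| (hlc.mul_exp_mul hf0 r).ordConnected_setOf_lt
    (fun x => mul_nonneg (hf0 x) (exp_pos _).le) hr

theorem integral_exp_neg_mul_mul_le_of_logConcave {f : ℝ → ℝ} (hf0 : ∀ x, 0 ≤ f x)
    (hlc : LogConcaveFn f) (hneg : ∀ᵐ x, x < 0 → f x = 0) (hf : Integrable f)
    (hmass : ∫ x, f x = 1) (hxf : Integrable fun x => x * f x) {μ : ℝ} (hμ : 0 < μ)
    (hmean : ∫ x, x * f x = μ) {l : ℝ} (hl : 0 ≤ l) :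
    ∫ x, exp (-(l * x)) * f x ≤ (1 + l * μ)⁻¹ := by
  -- `g` is the exponential density with mean `μ`, for which the bound is an equality.
  set g := exponentialPDFReal μ⁻¹
  have hc : 0 < μ⁻¹ := inv_pos.2 hμ
  have hlaplace_g : ∫ x, exp (-(l * x)) * g x = (1 + l * μ)⁻¹ := by
    rw [integral_exp_neg_mul_mul_exponentialPDFReal (by positivity)]
    field_simp
    ring
  have hφ : ConvexOn ℝ univ fun x => exp (-(l * x)) := by
    simpa [Function.comp_def] using
      convexOn_exp.comp_linearMap ((-l) • LinearMap.id (R := ℝ) (M := ℝ))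
  have hφf : Integrable fun x => exp (-(l * x)) * f x := by
    refine hf.mono (by fun_prop) ?_
    filter_upwards [hneg] with x hx
    rcases lt_or_ge x 0 with hx0 | hx0
    · simp [hx hx0]
    · rw [norm_mul, norm_of_nonneg (exp_pos _).le]
      exact mul_le_of_le_one_left (norm_nonneg _) (exp_le_one_iff.2 (by nlinarith))
  have hout : ∀ᵐ x, x ∉ {x | 0 ≤ x ∧ g x < f x} → f x ≤ g x := by
    filter_upwards [hneg] with x hx hxJ
    rcases lt_or_ge x 0 with hx0 | hx0
    · rw [hx hx0, show g x = 0 from exponentialPDFReal_of_neg hx0]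
    · exact not_lt.1 fun h => hxJ ⟨hx0, h⟩
  obtain ⟨α, β, hcross⟩ := hφ.exists_affine_ae_mul_sub_nonpos
    (fun x y hxy => exp_le_exp.2 (by nlinarith)) (fun x => (exp_pos _).le)
    (hlc.ordConnected_setOf_exponentialPDFReal_lt hf0 hc.le) ⟨0, fun x hx => hx.1⟩
    (ae_of_all _ fun x hx => hx.2.le) hout
  have hint_of_integral {w : ℝ → ℝ} {v : ℝ} (hw : ∫ x, w x * g x = v) (hv : v ≠ 0) :
      Integrable fun x => w x * g x := .of_integral_ne_zero (hw ▸ hv)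
  calc ∫ x, exp (-(l * x)) * f x
      ≤ ∫ x, exp (-(l * x)) * g x := integral_mul_le_of_affine_crossing hcross hf
        (.of_integral_ne_zero (by rw [integral_exponentialPDFReal hc]; exact one_ne_zero)) hxf
        (hint_of_integral (integral_id_mul_exponentialPDFReal hc) (by positivity)) hφf
        (hint_of_integral hlaplace_g (by positivity))
        (hmass.trans (integral_exponentialPDFReal hc).symm)
        (hmean.trans ((integral_id_mul_exponentialPDFReal hc).trans (inv_inv μ)).symm)
    _ = (1 + l * μ)⁻¹ := hlaplace_g

section DensityTransfer

variable {Ω : Type*} [MeasurableSpace Ω] {P : Measure Ω} {X : Ω → ℝ} {f : ℝ → ℝ}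

theorem integral_comp_eq_integral_mul_of_map_eq_withDensity (hX : Measurable X)
    (hf0 : ∀ x, 0 ≤ f x) (hfm : Measurable f)
    (hdens : P.map X = volume.withDensity fun x => ENNReal.ofReal (f x)) {w : ℝ → ℝ}
    (hw : AEStronglyMeasurable w (P.map X)) :
    ∫ ω, w (X ω) ∂P = ∫ x, w x * f x := by
  rw [← integral_map hX.aemeasurable hw, hdens, integral_withDensity_eq_integral_toReal_smul
    hfm.ennreal_ofReal (ae_of_all _ fun _ => ENNReal.ofReal_lt_top)]
  simp_rw [ENNReal.toReal_ofReal (hf0 _), smul_eq_mul, mul_comm]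

theorem integrable_comp_iff_of_map_eq_withDensity (hX : Measurable X)
    (hf0 : ∀ x, 0 ≤ f x) (hfm : Measurable f)
    (hdens : P.map X = volume.withDensity fun x => ENNReal.ofReal (f x)) {w : ℝ → ℝ}
    (hw : AEStronglyMeasurable w (P.map X)) :
    Integrable (fun ω => w (X ω)) P ↔ Integrable fun x => w x * f x := by
  rw [← Function.comp_def w X, ← integrable_map_measure hw hX.aemeasurable, hdens,
    integrable_withDensity_iff hfm.ennreal_ofReal (ae_of_all _ fun _ => ENNReal.ofReal_lt_top)]
  simp_rw [ENNReal.toReal_ofReal (hf0 _)]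

theorem ae_eq_zero_of_neg_of_map_eq_withDensity (hX : Measurable X) (hpos : ∀ᵐ ω ∂P, 0 ≤ X ω)
    (hf0 : ∀ x, 0 ≤ f x) (hfm : Measurable f)
    (hdens : P.map X = volume.withDensity fun x => ENNReal.ofReal (f x)) :
    ∀ᵐ x, x < 0 → f x = 0 := by
  have hnull : P.map X (Iio 0) = 0 := by
    rw [Measure.map_apply hX measurableSet_Iio]
    exact measure_mono_null (fun ω hω => not_le.2 hω) (ae_iff.1 hpos)
  rw [hdens, withDensity_apply _ measurableSet_Iio,
    setLIntegral_eq_zero_iff measurableSet_Iio hfm.ennreal_ofReal] at hnull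
  filter_upwards [hnull] with x hx hx0
  exact le_antisymm (ENNReal.ofReal_eq_zero.1 (hx hx0)) (hf0 x)

theorem mgf_neg_le_of_logConcave [IsProbabilityMeasure P] (hX : Measurable X)
    (hpos : ∀ᵐ ω ∂P, 0 ≤ X ω) (hf0 : ∀ x, 0 ≤ f x) (hlc : LogConcaveFn f)
    (hdens : P.map X = volume.withDensity fun x => ENNReal.ofReal (f x)) {μ : ℝ} (hμ : 0 < μ)
    (hmean : ∫ ω, X ω ∂P = μ) {l : ℝ} (hl : 0 ≤ l) :
    mgf X P (-l) ≤ (1 + l * μ)⁻¹ := by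
  have hfm := hlc.measurable hf0
  have hcomp {w : ℝ → ℝ} (hw : Continuous w) : ∫ ω, w (X ω) ∂P = ∫ x, w x * f x :=
    integral_comp_eq_integral_mul_of_map_eq_withDensity hX hf0 hfm hdens hw.aestronglyMeasurable
  have hint {w : ℝ → ℝ} (hw : Continuous w) :
      Integrable (fun ω => w (X ω)) P ↔ Integrable fun x => w x * f x :=
    integrable_comp_iff_of_map_eq_withDensity hX hf0 hfm hdens hw.aestronglyMeasurable
  have hmass : ∫ x, f x = 1 := by
    simpa using (hcomp (w := fun _ => 1) continuous_const).symm
  have hf : Integrable f := by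
    simpa using (hint (w := fun _ => 1) continuous_const).1 (integrable_const 1)
  have hxf : Integrable fun x => x * f x :=
    (hint continuous_id).1 (.of_integral_ne_zero (hmean ▸ hμ.ne'))
  calc mgf X P (-l) = ∫ x, exp (-(l * x)) * f x := by
        rw [mgf, ← hcomp (by fun_prop)]
        simp_rw [neg_mul]
    _ ≤ (1 + l * μ)⁻¹ := integral_exp_neg_mul_mul_le_of_logConcave hf0 hlc
        (ae_eq_zero_of_neg_of_map_eq_withDensity hX hpos hf0 hfm hdens) hf hmass hxf hμ
        ((hcomp continuous_id).symm.trans hmean) hl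

end DensityTransfer

theorem measureReal_sum_le_le_of_mgf_le {Ω ι : Type*} [MeasurableSpace Ω] {P : Measure Ω}
    [Fintype ι] {X : ι → Ω → ℝ} (hindep : iIndepFun X P) (hX : ∀ i, Measurable (X i))
    {t B : ℝ} (ht : t ≤ 0) (hint : ∀ i, Integrable (fun ω => exp (t * X i ω)) P)
    (hB : ∀ i, mgf (X i) P t ≤ B) (a : ℝ) :
    P.real {ω | ∑ i, X i ω ≤ a} ≤ exp (-t * a) * B ^ Fintype.card ι := by
  have := hindep.isProbabilityMeasure
  have h := measure_le_le_exp_mul_mgf (X := ∑ i, X i) a ht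
    (hindep.integrable_exp_mul_sum hX fun i _ => hint i)
  rw [hindep.mgf_sum hX] at h
  simp only [Finset.sum_apply] at h
  refine h.trans (mul_le_mul_of_nonneg_left ?_ (exp_pos _).le)
  calc ∏ i, mgf (X i) P t ≤ ∏ _i : ι, B :=
        Finset.prod_le_prod (fun i _ => mgf_nonneg) fun i _ => hB i
    _ = B ^ Fintype.card ι := by rw [Finset.prod_const, Finset.card_univ]

/-- Lower tail bound for a sum of `n` independent nonnegative logconcave random variables
with common mean `μ`: for `ε ∈ [0,1]`, `Pr[∑ Xᵢ ≤ (1−ε) μ n] ≤ exp (−n (−ln (1−ε) − ε))`. -/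
theorem sum_nonneg_logconcave_lower_tail {Ω : Type*} [MeasurableSpace Ω] (P : Measure Ω)
    [IsProbabilityMeasure P] {n : ℕ} (X : Fin n → Ω → ℝ)
    (hX : ∀ i, Measurable (X i))
    (hindep : iIndepFun X P)
    (hpos : ∀ i, ∀ᵐ ω ∂P, 0 ≤ X i ω)
    (f : Fin n → ℝ → ℝ) (hf : ∀ i t, 0 ≤ f i t) (hlc : ∀ i, LogConcaveFn (f i))
    (hdens : ∀ i, P.map (X i) = volume.withDensity (fun t => ENNReal.ofReal (f i t)))
    (μ : ℝ) (hμ : 0 < μ) (hmean : ∀ i, ∫ ω, X i ω ∂P = μ)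
    (ε : ℝ) (hε0 : 0 ≤ ε) (hε1 : ε ≤ 1) :
    P {ω | ∑ i, X i ω ≤ (1 - ε) * μ * n} ≤
      ENNReal.ofReal (Real.exp (-(n * (-Real.log (1 - ε) - ε)))) := by
  rcases hε1.eq_or_lt with rfl | hε1
  · refine prob_le_one.trans ?_
    rw [← ENNReal.ofReal_one]
    exact ENNReal.ofReal_le_ofReal (one_le_exp (by simp))
  have h1ε : 0 < 1 - ε := sub_pos.2 hε1
  set l := ε / ((1 - ε) * μ) with hl_def
  have hl : 0 ≤ l := by positivity
  have hlμ : (1 + l * μ)⁻¹ = 1 - ε := by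
    rw [hl_def]
    field_simp
    ring
  have hmgf (i : Fin n) : mgf (X i) P (-l) ≤ 1 - ε :=
    (mgf_neg_le_of_logConcave (hX i) (hpos i) (hf i) (hlc i) (hdens i) hμ (hmean i) hl).trans_eq
      hlμ
  have hint (i : Fin n) : Integrable (fun ω => exp (-l * X i ω)) P := by
    refine .of_mem_Icc 0 1 (by fun_prop) ?_
    filter_upwards [hpos i] with ω hω
    exact ⟨(exp_pos _).le, exp_le_one_iff.2 (by nlinarith)⟩
  have h := measureReal_sum_le_le_of_mgf_le hindep hX (neg_nonpos.2 hl) hint hmgf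
    ((1 - ε) * μ * n)
  rw [ENNReal.le_ofReal_iff_toReal_le (measure_ne_top _ _) (exp_pos _).le]
  refine h.trans_eq ?_
  rw [Fintype.card_fin, neg_neg, show l * ((1 - ε) * μ * n) = ε * n by rw [hl_def]; field_simp,
    ← exp_log (pow_pos h1ε n), log_pow, ← exp_add]
  ring_nf
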